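/- Let F : ℝ² → ℝ² be C¹ and let p be a point with det DF(p) ≠ 0. Then there exists ρ₀ > 0 such that for all 0 < ρ < ρ₀, the curve t ↦ F(p + ρ(cos t, sin t)) is a regular closed curve and its rotation number equals sgn(det DF(p)). -/

import Mathlib

/-!
Write `DF(p) z = a z + b z̄`, so that `det DF(p) = |a|² - |b|²`. The tangent of the image of the
circle `p + ρ e^{it}` is `DF(p + ρ e^{it}) (iρ e^{it})`. Once `‖DF(x) - DF(p)‖ < ||a| - |b||` on the
circle, this tangent is closer to the dominant term, `iρa e^{it}` if `|a| > |b|` and `-iρb e^{-it}`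
if `|b| > |a|`, than that term is to `0`. Two closed curves that close to each other have the same
winding number about `0`, and the dominant term winds `sgn (|a|² - |b|²)` times.
-/

open Real Set Complex ComplexConjugate

theorem sub_eq_sub_of_exp_mul_I_eq {α : Type*} [TopologicalSpace α] {s : Set α}
    (hs : IsPreconnected s) {θ₁ θ₂ : α → ℝ} (h₁ : ContinuousOn θ₁ s) (h₂ : ContinuousOn θ₂ s)
    (h : ∀ t ∈ s, exp (θ₁ t * I) = exp (θ₂ t * I)) {x y : α} (hx : x ∈ s) (hy : y ∈ s) :
    θ₁ y - θ₁ x = θ₂ y - θ₂ x := by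
  have hmaps : MapsTo (θ₁ - θ₂) s (AddSubgroup.zmultiples (2 * π)) := fun t ht => by
    obtain ⟨m, hm⟩ := Circle.exp_eq_exp.mp (Circle.coe_inj.mp (h t ht))
    exact ⟨m, by simp [hm]⟩
  have := hs.constant_of_mapsTo (isDiscrete_iff_discreteTopology.mpr
    (inferInstanceAs (DiscreteTopology (AddSubgroup.zmultiples (2 * π))))) (h₁.sub h₂) hmaps hy hx
  simp only [Pi.sub_apply] at this
  linarith

theorem mul_exp_mul_I_eq_norm_mul_exp (c : ℂ) (s : ℝ) :
    c * exp (s * I) = ‖c * exp (s * I)‖ * exp ((arg c + s : ℝ) * I) := by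
  rw [norm_mul, norm_exp_ofReal_mul_I, mul_one, ofReal_add, add_mul, Complex.exp_add, ← mul_assoc,
    norm_mul_exp_arg_mul_I]

theorem lift_sub_eq_lift_sub_of_norm_sub_lt {α : Type*} [TopologicalSpace α] {s : Set α}
    (hs : IsPreconnected s) {u v : α → ℂ} {θu θv : α → ℝ}
    (hu : ContinuousOn u s) (hv : ContinuousOn v s) (hθu : ContinuousOn θu s)
    (hθv : ContinuousOn θv s) (hlt : ∀ t ∈ s, ‖u t - v t‖ < ‖v t‖)
    (hu_lift : ∀ t ∈ s, u t = ‖u t‖ * exp (θu t * I))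
    (hv_lift : ∀ t ∈ s, v t = ‖v t‖ * exp (θv t * I))
    {x y : α} (hx : x ∈ s) (hy : y ∈ s) (hux : u y = u x) (hvx : v y = v x) :
    θu y - θu x = θv y - θv x := by
  have hv0 : ∀ t ∈ s, v t ≠ 0 := fun t ht h0 => by
    simpa [h0] using (norm_nonneg _).trans_lt (hlt t ht)
  have hu0 : ∀ t ∈ s, u t ≠ 0 := fun t ht h0 => by simpa [h0] using hlt t ht
  have hslit : ∀ t ∈ s, u t / v t ∈ slitPlane := fun t ht => by
    have h := mem_slitPlane_of_norm_lt_one (z := (u t - v t) / v t) (by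
      rw [norm_div, div_lt_one (norm_pos_iff.mpr (hv0 t ht))]; exact hlt t ht)
    rwa [sub_div, div_self (hv0 t ht), add_sub_cancel] at h
  -- `θv + arg (u / v)` is a second continuous lift of `u`
  set φ : α → ℝ := fun t => θv t + arg (u t / v t)
  have hφ : ContinuousOn φ s := hθv.add fun t ht =>
    (continuousAt_arg (hslit t ht)).comp_continuousWithinAt (f := fun t => u t / v t)
      ((hu t ht).div (hv t ht) (hv0 t ht))
  have hφ_lift : ∀ t ∈ s, exp (θu t * I) = exp (φ t * I) := fun t ht => by
    have hnorm : ‖u t‖ = ‖v t‖ * ‖u t / v t‖ := by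
      rw [norm_div, mul_div_cancel₀ _ (norm_ne_zero_iff.mpr (hv0 t ht))]
    refine mul_left_cancel₀ (ofReal_ne_zero.mpr (norm_ne_zero_iff.mpr (hu0 t ht))) ?_
    rw [← hu_lift t ht, hnorm, ofReal_mul, ofReal_add, add_mul, Complex.exp_add,
      mul_mul_mul_comm, ← hv_lift t ht, norm_mul_exp_arg_mul_I, mul_div_cancel₀ _ (hv0 t ht)]
  have h := sub_eq_sub_of_exp_mul_I_eq hs hθu hφ hφ_lift hx hy
  simp only [φ, hux, hvx] at h
  linarith

theorem exists_apply_eq_mul_add_mul_conj (A : ℂ →ₗ[ℝ] ℂ) :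
    ∃ a b : ℂ, ∀ z, A z = a * z + b * conj z := by
  refine ⟨(A 1 - I * A I) / 2, (A 1 + I * A I) / 2, fun z => ?_⟩
  have hz : z = z.re • (1 : ℂ) + z.im • I := by simp [real_smul]
  rw [hz, map_add, map_smul, map_smul]
  apply Complex.ext <;> simp <;> ring

theorem det_eq_of_apply_eq_mul_add_mul_conj {A : ℂ →ₗ[ℝ] ℂ} {a b : ℂ}
    (h : ∀ z, A z = a * z + b * conj z) : LinearMap.det A = ‖a‖ ^ 2 - ‖b‖ ^ 2 := by
  rw [← LinearMap.det_toMatrix basisOneI, Matrix.det_fin_two, ← normSq_eq_norm_sq,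
    ← normSq_eq_norm_sq]
  simp [LinearMap.toMatrix_apply, h, normSq_apply]
  ring

theorem conj_exp_mul_I (t : ℝ) : conj (exp (t * I)) = exp ((-1 * t : ℝ) * I) := by
  simp [← exp_conj]

theorem exists_norm_apply_exp_mul_I_sub_le (A : ℂ →ₗ[ℝ] ℂ) (hA : LinearMap.det A ≠ 0) :
    ∃ (c : ℂ) (m : ℝ), m < ‖c‖ ∧ ∀ t : ℝ,
      ‖A (exp (t * I) * I) - c * exp ((Real.sign (LinearMap.det A) * t : ℝ) * I)‖ ≤ m := by
  obtain ⟨a, b, h⟩ := exists_apply_eq_mul_add_mul_conj A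
  have hdet := det_eq_of_apply_eq_mul_add_mul_conj h
  rcases lt_or_gt_of_ne (fun hab : ‖a‖ = ‖b‖ => hA (by rw [hdet, hab, sub_self])) with hab | hab
  · have hsign : Real.sign (LinearMap.det A) = -1 :=
      Real.sign_of_neg (by rw [hdet, sub_neg]; gcongr)
    refine ⟨-(b * I), ‖a‖, by simpa using hab, fun t => le_of_eq ?_⟩
    rw [hsign, h, map_mul, conj_exp_mul_I, conj_I, add_sub_assoc,
      show b * (exp ((-1 * t : ℝ) * I) * -I) - -(b * I) * exp ((-1 * t : ℝ) * I) = 0 by ring]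
    simp
  · have hsign : Real.sign (LinearMap.det A) = 1 :=
      Real.sign_of_pos (by rw [hdet, sub_pos]; gcongr)
    refine ⟨a * I, ‖b‖, by simpa using hab, fun t => le_of_eq ?_⟩
    rw [hsign, one_mul, h, add_sub_right_comm, show a * (exp (t * I) * I) - a * I * exp (t * I) = 0
      by ring]
    simp

theorem exp_sign_mul_two_pi_mul_I (r : ℝ) : exp (Real.sign r * (2 * π) * I) = 1 := by
  rcases Real.sign_apply_eq r with h | h | h <;> simp [h, Complex.exp_neg]

theorem norm_apply_smul_sub_smul_lt {E F : Type*} [NormedAddCommGroup E] [NormedSpace ℝ E]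
    [NormedAddCommGroup F] [NormedSpace ℝ F] {A B : E →L[ℝ] F} {z : E} {w : F} {m ρ : ℝ}
    (hρ : 0 < ρ) (hz : ‖z‖ = 1) (hAz : ‖A z - w‖ ≤ m) (hBA : ‖B - A‖ < ‖w‖ - m) :
    ‖B (ρ • z) - ρ • w‖ < ‖ρ • w‖ := by
  rw [map_smul, ← smul_sub, norm_smul, norm_smul]
  refine mul_lt_mul_of_pos_left ?_ (norm_pos_iff.mpr hρ.ne')
  calc ‖B z - w‖ = ‖(B - A) z + (A z - w)‖ := by simp
    _ ≤ ‖B - A‖ + m := by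
      grw [norm_add_le, (B - A).le_opNorm, hz, mul_one, hAz]
    _ < ‖w‖ := by linarith

/-- If `F : ℝ² → ℝ²` (identified with `ℂ`) is `C¹` and `det DF(p) ≠ 0`, then
images under `F` of sufficiently small positively oriented circles around `p`
are regular closed curves of rotation number `sgn (det DF(p))`. -/
theorem stmt_16 (F : ℂ → ℂ) (hF : ContDiff ℝ 1 F) (p : ℂ)
    (hp : LinearMap.det ((fderiv ℝ F p) : ℂ →ₗ[ℝ] ℂ) ≠ 0) :
    ∃ ρ₀ : ℝ, 0 < ρ₀ ∧ ∀ ρ : ℝ, 0 < ρ → ρ < ρ₀ →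
      (∀ t ∈ Icc 0 (2 * π),
        deriv (fun t : ℝ => F (p + (ρ : ℂ) * Complex.exp ((t : ℂ) * Complex.I))) t ≠ 0) ∧
      ∀ θ : ℝ → ℝ, ContinuousOn θ (Icc 0 (2 * π)) →
        (∀ t ∈ Icc 0 (2 * π),
          deriv (fun t : ℝ => F (p + (ρ : ℂ) * Complex.exp ((t : ℂ) * Complex.I))) t =
            (‖deriv (fun t : ℝ => F (p + (ρ : ℂ) * Complex.exp ((t : ℂ) * Complex.I))) t‖ : ℂ) *
              Complex.exp ((θ t : ℂ) * Complex.I)) →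
        θ (2 * π) - θ 0 = 2 * π * Real.sign (LinearMap.det ((fderiv ℝ F p) : ℂ →ₗ[ℝ] ℂ)) := by
  set ε := Real.sign (LinearMap.det ((fderiv ℝ F p) : ℂ →ₗ[ℝ] ℂ))
  obtain ⟨c, m, hmc, hdom⟩ := exists_norm_apply_exp_mul_I_sub_le _ hp
  have hDF := hF.continuous_fderiv one_ne_zero
  obtain ⟨δ, hδ, hclose⟩ :=
    Metric.continuousAt_iff.mp (hDF.continuousAt (x := p)) (‖c‖ - m) (sub_pos.2 hmc)
  refine ⟨δ, hδ, fun ρ hρ hρδ => ?_⟩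
  have hu : deriv (fun t : ℝ => F (p + ρ * exp (t * I))) =
      fun t => fderiv ℝ F (circleMap p ρ t) (circleMap 0 ρ t * I) := funext fun t =>
    ((hF.differentiable one_ne_zero _).hasFDerivAt.comp_hasDerivAt t
      (hasDerivAt_circleMap p ρ t)).deriv
  set w : ℝ → ℂ := fun t => ρ * c * exp ((ε * t : ℝ) * I)
  have hlt : ∀ t, ‖deriv (fun t : ℝ => F (p + ρ * exp (t * I))) t - w t‖ < ‖w t‖ := fun t => by
    have hclose_t : ‖fderiv ℝ F (circleMap p ρ t) - fderiv ℝ F p‖ < ‖c‖ - m := by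
      simpa [dist_eq_norm, abs_of_pos hρ, hρδ] using hclose (x := circleMap p ρ t)
    have h := norm_apply_smul_sub_smul_lt hρ (by simp) (hdom t)
      (by rwa [norm_mul, norm_exp_ofReal_mul_I, mul_one])
    simpa [hu, w, circleMap_zero, real_smul, mul_assoc] using h
  refine ⟨fun t _ h0 => by simpa [h0] using hlt t, fun θ hθ hθ_lift => ?_⟩
  have hw_lift : ∀ t, w t = ‖w t‖ * exp ((arg (ρ * c) + ε * t : ℝ) * I) := fun t =>
    mul_exp_mul_I_eq_norm_mul_exp _ _
  rw [lift_sub_eq_lift_sub_of_norm_sub_lt isPreconnected_Icc (v := w) ?_ (by fun_prop) hθ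
    (by fun_prop) (fun t _ => hlt t) hθ_lift (fun t _ => hw_lift t) (left_mem_Icc.2 two_pi_pos.le)
    (right_mem_Icc.2 two_pi_pos.le) ?_ ?_]
  · ring
  · rw [hu]
    exact ((hDF.comp (continuous_circleMap p ρ)).clm_apply
      ((continuous_circleMap 0 ρ).mul continuous_const)).continuousOn
  · simp only [hu, (periodic_circleMap _ _).eq]
  · simp [w, ε, exp_sign_mul_two_pi_mul_I]
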